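/- In the time-dependent pure exchange economy, fix i and p̄ ∈ D̃, and suppose ∫_0^T x̄_i^j(t) dt < r_j for every good j, where x̄_i ∈ K̃_i(p̄) = M_i(p̄) ∩ H. If x̄_i* ∈ L satisfies ⟪x̄_i*, y_i − x̄_i⟫_m ≥ 0 for all y_i ∈ K̃_i(p̄), then ⟪x̄_i*, y_i − x̄_i⟫_m ≥ 0 for all y_i ∈ M_i(p̄); that is, a solution of the variational inequality over the truncated budget set K̃_i(p̄) also solves it over the full (unbounded) budget set M_i(p̄). -/

import Mathlib

/-!
STATEMENT 11: In the time-dependent pure exchange economy, a solution of the variational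
inequality over the truncated budget set `K̃_i(p̄) = M_i(p̄) ∩ H` whose consumption is
strictly below the truncation levels (`∫₀ᵀ x̄_iʲ(t) dt < r_j` for every good `j`) also
solves the variational inequality over the full (unbounded) budget set `M_i(p̄)`.

Membership of `p̄` in the price set `D̃` is expressed through its defining pointwise
properties: the components of `p̄` are nonnegative and sum to one a.e.
-/

open MeasureTheory
open scoped RealInnerProductSpace

noncomputable section

/-- Lebesgue measure restricted to the time interval `[0, T]`. -/
def timeMeasure (T : ℝ) : Measure ℝ := volume.restrict (Set.Icc 0 T)

/-- The commodity space `L = L²([0,T], ℝ^m)`, with its `L²` (real) inner product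
`⟪h, g⟫ = ∫₀ᵀ ⟨h t, g t⟩ dt`. -/
abbrev EcoL (m : ℕ) (T : ℝ) := Lp (EuclideanSpace ℝ (Fin m)) 2 (timeMeasure T)

/-- The ordered cone `C_L = {α ∈ L : αʲ(t) ≥ 0 for a.e. t, for all goods j}`. -/
def CL (m : ℕ) (T : ℝ) : Set (EcoL m T) :=
  {x | ∀ j : Fin m, ∀ᵐ t ∂(timeMeasure T), 0 ≤ x t j}

/-- The budget set `M_i(p) = {x ∈ C_L : ⟪p, x − e_i⟫ ≤ 0}` of an agent with endowment `e`. -/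
def budgetSet (m : ℕ) (T : ℝ) (e p : EcoL m T) : Set (EcoL m T) :=
  {x ∈ CL m T | ⟪p, x - e⟫ ≤ 0}

/-- The truncation set `H = ∏_j H_j`, where
`H_j = {α ∈ L²([0,T],ℝ) : α(t) ≥ 0 a.e., ∫₀ᵀ α(t) dt ≤ r_j}`. -/
def Hset (m : ℕ) (T : ℝ) (r : Fin m → ℝ) : Set (EcoL m T) :=
  {x | ∀ j : Fin m, (∀ᵐ t ∂(timeMeasure T), 0 ≤ x t j) ∧
    ∫ t, x t j ∂(timeMeasure T) ≤ r j}

/-- The truncated budget set `K̃_i(p) = M_i(p) ∩ H`. -/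
def truncBudget (m : ℕ) (T : ℝ) (e : EcoL m T) (r : Fin m → ℝ) (p : EcoL m T) :
    Set (EcoL m T) :=
  budgetSet m T e p ∩ Hset m T r

/-- The mean value utility `𝒰(x) = ∫₀ᵀ u(t, x(t)) dt`. -/
def meanUtility (m : ℕ) (T : ℝ) (u : ℝ → EuclideanSpace ℝ (Fin m) → ℝ) (x : EcoL m T) : ℝ :=
  ∫ t, u t (x t) ∂(timeMeasure T)

/-- Assumption (A1) on a utility function `u`, with gradient (in the second variable) `G`:
`u(t,w)` is measurable in `t` for each `w`; `u(t,·)` is concave on `ℝ^m₊` for a.e. `t`;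
`u(t,·)` is `C¹` on `ℝ^m₊` (with gradient `G(t,·)`) for a.e. `t`; `G(·,w)` is measurable for
each `w`; and the growth condition `‖∇u(t,w)‖ ≤ C‖w‖ + g(t)` holds on `ℝ^m₊` for a.e. `t`,
for some `C > 0` and some nonnegative `g ∈ L²([0,T],ℝ)`. -/
def AssumptionA1 (m : ℕ) (T : ℝ) (u : ℝ → EuclideanSpace ℝ (Fin m) → ℝ)
    (G : ℝ → EuclideanSpace ℝ (Fin m) → EuclideanSpace ℝ (Fin m)) : Prop :=
  (∀ w, Measurable fun t => u t w) ∧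
  (∀ᵐ t ∂(timeMeasure T), ConcaveOn ℝ {w : EuclideanSpace ℝ (Fin m) | ∀ j, 0 ≤ w j} (u t)) ∧
  (∀ᵐ t ∂(timeMeasure T), ∀ w : EuclideanSpace ℝ (Fin m), (∀ j, 0 ≤ w j) →
    HasGradientAt (u t) (G t w) w) ∧
  (∀ w, Measurable fun t => G t w) ∧
  (∃ C > (0:ℝ), ∃ g : ℝ → ℝ, MemLp g 2 (timeMeasure T) ∧
    (∀ᵐ t ∂(timeMeasure T), 0 ≤ g t) ∧
    (∀ᵐ t ∂(timeMeasure T), ∀ w : EuclideanSpace ℝ (Fin m), (∀ j, 0 ≤ w j) →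
      ‖G t w‖ ≤ C * ‖w‖ + g t))

/-!
The truncation constraints `∫₀ᵀ xʲ ≤ r_j` are slack at `x̄`, and every other constraint of
`K̃(p̄) = M(p̄) ∩ H` is convex. So for `y ∈ M(p̄)` a short step `x̄ + λ (y - x̄)`, `0 < λ ≤ 1`,
stays in `K̃(p̄)`, and the variational inequality there, `0 ≤ λ ⟪x̄*, y - x̄⟫`, gives it for `y`.
-/

open Filter Topology

theorem inner_sub_nonneg_of_add_smul_sub_mem {E : Type*} [NormedAddCommGroup E]
    [InnerProductSpace ℝ E] {K : Set E} {a x y : E} (hVI : ∀ z ∈ K, 0 ≤ ⟪a, z - x⟫)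
    {t : ℝ} (ht : 0 < t) (hmem : x + t • (y - x) ∈ K) : 0 ≤ ⟪a, y - x⟫ := by
  have h := hVI _ hmem
  rwa [add_sub_cancel_left, real_inner_smul_right, mul_nonneg_iff_of_pos_left ht] at h

theorem exists_pos_le_one_forall_add_mul_sub_le {ι : Type*} [Finite ι] {X r : ι → ℝ}
    (hslack : ∀ j, X j < r j) (I : ι → ℝ) :
    ∃ t : ℝ, 0 < t ∧ t ≤ 1 ∧ ∀ j, X j + t * (I j - X j) ≤ r j := by
  have hnear : ∀ j, ∀ᶠ t in 𝓝 (0 : ℝ), X j + t * (I j - X j) < r j := fun j =>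
    (continuous_const.add (continuous_id.mul continuous_const)).continuousAt.eventually_lt
      continuousAt_const (by simpa using hslack j)
  have hsmall : ∀ᶠ t in 𝓝[>] (0 : ℝ), (∀ j, X j + t * (I j - X j) < r j) ∧ t ≤ 1 :=
    ((eventually_all.2 hnear).and (eventually_le_nhds one_pos)).filter_mono nhdsWithin_le_nhds
  obtain ⟨t, ⟨hroom, ht1⟩, ht0⟩ := (hsmall.and self_mem_nhdsWithin).exists
  exact ⟨t, ht0, ht1, fun j => (hroom j).le⟩

instance (T : ℝ) : IsFiniteMeasure (timeMeasure T) := by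
  unfold timeMeasure; infer_instance

theorem convex_CL (m : ℕ) (T : ℝ) : Convex ℝ (CL m T) := by
  intro x hx y hy a b ha hb _ j
  filter_upwards [Lp.coeFn_add (a • x) (b • y), Lp.coeFn_smul a x, Lp.coeFn_smul b y,
    hx j, hy j] with t hadd hax hby hxt hyt
  simp only [hadd, Pi.add_apply, hax, hby, Pi.smul_apply, PiLp.add_apply, PiLp.smul_apply,
    smul_eq_mul]
  positivity

theorem convex_budgetSet (m : ℕ) (T : ℝ) (e p : EcoL m T) :
    Convex ℝ (budgetSet m T e p) := by
  have hhalf : Convex ℝ {x : EcoL m T | ⟪p, x - e⟫ ≤ 0} := by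
    simpa only [innerₛₗ_apply_apply, inner_sub_right, sub_nonpos] using
      convex_halfSpace_le (innerₛₗ ℝ p).isLinear ⟪p, e⟫
  exact (convex_CL m T).inter hhalf

theorem integrable_coord {m : ℕ} {T : ℝ} (x : EcoL m T) (j : Fin m) :
    Integrable (fun t => x t j) (timeMeasure T) :=
  (EuclideanSpace.proj (𝕜 := ℝ) j).integrable_comp ((Lp.memLp x).integrable (by norm_num))

def coordIntegral (m : ℕ) (T : ℝ) (j : Fin m) : EcoL m T →ₗ[ℝ] ℝ where
  toFun x := ∫ t, x t j ∂(timeMeasure T)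
  map_add' x y := by
    rw [← integral_add (integrable_coord x j) (integrable_coord y j)]
    refine integral_congr_ae ?_
    filter_upwards [Lp.coeFn_add x y] with t ht
    rw [ht, Pi.add_apply, PiLp.add_apply]
  map_smul' c x := by
    rw [RingHom.id_apply, smul_eq_mul, ← integral_const_mul]
    refine integral_congr_ae ?_
    filter_upwards [Lp.coeFn_smul c x] with t ht
    rw [ht, Pi.smul_apply, PiLp.smul_apply, smul_eq_mul]

theorem truncated_budget_vi_solves_full_budget_vi_general
    (m n : ℕ) (T : ℝ) (i : Fin n)
    (e : Fin n → EcoL m T)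
    (r : Fin m → ℝ)
    (pbar : EcoL m T)
    (xbar : EcoL m T) (hxbar : xbar ∈ truncBudget m T (e i) r pbar)
    (hstrict : ∀ j, ∫ t, xbar t j ∂(timeMeasure T) < r j)
    (xs : EcoL m T)
    (hVI : ∀ y ∈ truncBudget m T (e i) r pbar, 0 ≤ ⟪xs, y - xbar⟫) :
    ∀ y ∈ budgetSet m T (e i) pbar, 0 ≤ ⟪xs, y - xbar⟫ := by
  intro y hy
  obtain ⟨t, ht0, ht1, hroom⟩ :=
    exists_pos_le_one_forall_add_mul_sub_le (X := fun j => coordIntegral m T j xbar) hstrict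
      (fun j => coordIntegral m T j y)
  have hstep : xbar + t • (y - xbar) ∈ budgetSet m T (e i) pbar :=
    (convex_budgetSet m T (e i) pbar).add_smul_sub_mem hxbar.1 hy ⟨ht0.le, ht1⟩
  refine inner_sub_nonneg_of_add_smul_sub_mem hVI ht0 ⟨hstep, fun j => ⟨hstep.1 j, ?_⟩⟩
  show coordIntegral m T j (xbar + t • (y - xbar)) ≤ r j
  simpa only [map_add, map_smul, map_sub, smul_eq_mul] using hroom j

/-- **Lemma (from the truncated budget set to the full budget set).**
Fix an agent `i` and `p̄ ∈ D̃`, and suppose `x̄_i ∈ K̃_i(p̄) = M_i(p̄) ∩ H` satisfies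
`∫₀ᵀ x̄_iʲ(t) dt < r_j` for every good `j`, where `r_j > ∫₀ᵀ Σ_i e_iʲ(t) dt`. If `x̄_i* ∈ L`
satisfies `⟪x̄_i*, y_i − x̄_i⟫ ≥ 0` for all `y_i ∈ K̃_i(p̄)`, then
`⟪x̄_i*, y_i − x̄_i⟫ ≥ 0` for all `y_i ∈ M_i(p̄)`. -/
theorem truncated_budget_vi_solves_full_budget_vi
    (m n : ℕ) (T : ℝ) (hT : 0 < T) (i : Fin n)
    (e : Fin n → EcoL m T) (he : ∀ i', e i' ∈ CL m T)
    (r : Fin m → ℝ) (hr : ∀ j, ∫ t, (∑ i', e i' t j) ∂(timeMeasure T) < r j)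
    (pbar : EcoL m T)
    (hpbar_nonneg : ∀ j, ∀ᵐ t ∂(timeMeasure T), 0 ≤ pbar t j)
    (hpbar_sum : ∀ᵐ t ∂(timeMeasure T), ∑ j, pbar t j = 1)
    (xbar : EcoL m T) (hxbar : xbar ∈ truncBudget m T (e i) r pbar)
    (hstrict : ∀ j, ∫ t, xbar t j ∂(timeMeasure T) < r j)
    (xs : EcoL m T)
    (hVI : ∀ y ∈ truncBudget m T (e i) r pbar, 0 ≤ ⟪xs, y - xbar⟫) :
    ∀ y ∈ budgetSet m T (e i) pbar, 0 ≤ ⟪xs, y - xbar⟫ :=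
  truncated_budget_vi_solves_full_budget_vi_general m n T i e r pbar xbar hxbar hstrict xs hVI
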